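/- Let k ≥ 2. In ℝ^{k+2} consider the k+6 vectors: d₁ = (1,2,…,k,0,1), d₂ = (0,…,0,0,−2), d₃ = (1,2,…,k,1,0), d₄ = (0,…,0,−2,0), d₅ = (2,2,…,2,0,0), d_{5+i} = −2e_i for i = 1,…,k, and d_{k+6} = (0,…,0,1,1). For each j ∈ {1,…,k+6} let F_j = cone({d_l : l ≠ j}). Then the intersection ⋂_{j=1}^{k+6} F_j equals cone(q₁, q₂, u₁, …, u_k), where q₁ = e_{k+1}, q₂ = e_{k+2}, and u_i = (1,2,…,i−1,i,i,…,i,0,0) (first i−1 coordinates 1,2,…,i−1, coordinates i through k equal to i, last two coordinates 0), and this cone equals the set {a ∈ ℝ^{k+2} : a_{k+1} ≥ 0, a_{k+2} ≥ 0, 2a₁ ≥ a₂, a_k ≥ a_{k−1}, and 2a_i ≥ a_{i−1} + a_{i+1} for all 1 < i < k}. -/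

import Mathlib

/-!
For `1 ≤ i ≤ k` let `λ_i(a) = 2a_i - a_{i-1} - a_{i+1}`, read with `a_0 = 0` and with `a_k` in
place of `a_{k+1}` when `i = k` (so `λ_k = a_k - a_{k-1}`). The inequalities of the statement say
exactly `a_{k+1}, a_{k+2} ≥ 0` and `λ_i ≥ 0`, and three inclusions close the circle.

* Each of these `k + 2` linear functionals is nonnegative on every column but one (`d₄`, `d₂`
  and `d_{5+i}` respectively), hence on the intersection of the facet cones.
* Summation by parts gives `a = ∑ λ_i(a) u_i + a_{k+1} q₁ + a_{k+2} q₂`, so the inequalities put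
  `a` in `cone(q₁, q₂, u)`.
* Each of `q₁`, `q₂`, `u_i` has two or three nonnegative representations in the columns with no
  column common to all of them, so every generator lies in every facet cone.
-/

/-- The cone generated by a set `S` of vectors: all finite nonnegative real
linear combinations of elements of `S`. -/
def cone {m : ℕ} (S : Set (Fin m → ℝ)) : Set (Fin m → ℝ) :=
  {x | ∃ (n : ℕ) (c : Fin n → ℝ) (g : Fin n → (Fin m → ℝ)),
    (∀ i, 0 ≤ c i) ∧ (∀ i, g i ∈ S) ∧ x = ∑ i, c i • g i}

open Finset

theorem cone_eq_hull {m : ℕ} (S : Set (Fin m → ℝ)) : cone S = PointedCone.hull ℝ S := by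
  ext x
  rw [SetLike.mem_coe, Submodule.mem_span_set']
  constructor
  · rintro ⟨n, c, g, hc, hg, rfl⟩
    exact ⟨n, fun i => ⟨c i, hc i⟩, fun i => ⟨g i, hg i⟩, by simp [Nonneg.mk_smul]⟩
  · rintro ⟨n, c, g, rfl⟩
    exact ⟨n, fun i => c i, fun i => g i, fun i => (c i).2, fun i => (g i).2,
      by simp [Nonneg.coe_smul]⟩

namespace PointedCone

variable {𝕜 E : Type*} [Semiring 𝕜] [PartialOrder 𝕜] [IsOrderedRing 𝕜] [AddCommMonoid E]
  [Module 𝕜 E]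

theorem nonneg_of_mem_hull {S : Set E} (φ : E →ₗ[𝕜] 𝕜) (hφ : ∀ s ∈ S, 0 ≤ φ s) {x : E}
    (hx : x ∈ hull 𝕜 S) : 0 ≤ φ x := by
  induction hx using Submodule.span_induction with
  | mem s hs => exact hφ s hs
  | zero => simp
  | add x y _ _ hx hy => rw [map_add]; exact add_nonneg hx hy
  | smul c x _ hx => rw [← Nonneg.coe_smul, map_smul]; exact mul_nonneg c.2 hx

theorem mem_iInter_hull_image_ne {ι ρ : Type*} [Fintype ι] {d : ι → E} {x : E}
    (c : ρ → ι → 𝕜) (hc : ∀ r i, 0 ≤ c r i) (hx : ∀ r, x = ∑ i, c r i • d i)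
    (hcover : ∀ i, ∃ r, c r i = 0) : x ∈ ⋂ l, (hull 𝕜 (d '' {i | i ≠ l}) : Set E) := by
  refine Set.mem_iInter.mpr fun l => ?_
  obtain ⟨r, hr⟩ := hcover l
  rw [SetLike.mem_coe, hx r]
  refine Submodule.sum_mem _ fun i _ => ?_
  by_cases hi : i = l
  · simp [hi, hr]
  · exact smul_mem _ (hc r i) (subset_hull ⟨i, hi, rfl⟩)

end PointedCone

theorem Finset.sum_sub_mul_min_eq_sum_range {R : Type*} [CommRing R] (Δ : ℕ → R) {n j : ℕ}
    (hj : j < n) (hΔ : Δ n = 0) :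
    ∑ m ∈ range n, (Δ m - Δ (m + 1)) * ((min (j + 1) (m + 1) : ℕ) : R) =
      ∑ t ∈ range (j + 1), Δ t := by
  have hmin : ∀ m, ((min (j + 1) (m + 1) : ℕ) : R) =
      ∑ t ∈ range (j + 1), if t ≤ m then 1 else 0 := by
    intro m
    rw [sum_boole, ← card_range (min (j + 1) (m + 1))]
    congr 2
    ext t
    simp only [mem_range, mem_filter]
    omega
  have htail : ∀ t ≤ n, ∑ m ∈ range n, (if t ≤ m then Δ m - Δ (m + 1) else 0) = Δ t := by
    intro t ht
    rw [← sum_filter, show (range n).filter (t ≤ ·) = Ico t n by ext; simp; omega,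
      ← neg_inj, ← sum_neg_distrib]
    simp_rw [neg_sub]
    rw [sum_Ico_sub Δ ht, hΔ, zero_sub]
  simp_rw [hmin, mul_sum, mul_boole]
  rw [sum_comm]
  exact sum_congr rfl fun t ht => htail t (by rw [mem_range] at ht; omega)

theorem Fin.sum_mul_ite_val_eq {R : Type*} [CommRing R] {k : ℕ} (f : ℕ → R) (b : R) (j : ℕ) :
    ∑ m : Fin k, f m * (if j = (m : ℕ) then b else 0) = if j < k then f j * b else 0 := by
  simp_rw [mul_ite, mul_zero]
  rw [Fin.sum_univ_eq_sum_range (fun m => if j = m then f m * b else 0), sum_ite_eq]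
  simp

namespace MovableCone

variable {k : ℕ}

def weightColumn (k : ℕ) : Fin 5 ⊕ Fin k ⊕ Unit → Fin (k + 2) → ℝ :=
  Sum.elim
    ![fun j => if (j : ℕ) < k then (((j : ℕ) + 1 : ℕ) : ℝ) else if (j : ℕ) = k then 0 else 1,
      fun j => if (j : ℕ) = k + 1 then -2 else 0,
      fun j => if (j : ℕ) < k then (((j : ℕ) + 1 : ℕ) : ℝ) else if (j : ℕ) = k then 1 else 0,
      fun j => if (j : ℕ) = k then -2 else 0,
      fun j => if (j : ℕ) < k then 2 else 0]
    (Sum.elim (fun i j => if (j : ℕ) = (i : ℕ) then -2 else 0)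
      fun _ j => if (j : ℕ) < k then 0 else 1)

def stdVec (k n : ℕ) : Fin (k + 2) → ℝ := fun j => if (j : ℕ) = n then 1 else 0

def ramp (k i : ℕ) : Fin (k + 2) → ℝ :=
  fun j => if (j : ℕ) < k then ((min ((j : ℕ) + 1) (i + 1) : ℕ) : ℝ) else 0

def generators (k : ℕ) : Set (Fin (k + 2) → ℝ) :=
  {stdVec k k} ∪ {stdVec k (k + 1)} ∪ Set.range fun i : Fin k => ramp k i

/-- The first `k` coordinates shifted by one and padded at both ends: `paddedCoord k n a` is
`a ⟨n - 1, _⟩` for `1 ≤ n ≤ k`, `0` for `n = 0` and `a ⟨k - 1, _⟩` for `n ≥ k`. -/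
def paddedCoord (k n : ℕ) : (Fin (k + 2) → ℝ) →ₗ[ℝ] ℝ :=
  if n = 0 then 0 else LinearMap.proj ⟨min n k - 1, by omega⟩

/-- The functional `λ_{i+1}` of the sketch above (coordinates in `Fin (k + 2)` are 0-based). -/
def secondDiff (k i : ℕ) : (Fin (k + 2) → ℝ) →ₗ[ℝ] ℝ :=
  (2 : ℝ) • paddedCoord k (i + 1) - paddedCoord k i - paddedCoord k (i + 2)

def concaveCone (k : ℕ) : Set (Fin (k + 2) → ℝ) :=
  {a | 0 ≤ a ⟨k, by simp⟩ ∧ 0 ≤ a ⟨k + 1, by simp⟩ ∧ ∀ i < k, 0 ≤ secondDiff k i a}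

theorem paddedCoord_apply {n : ℕ} (hn : n ≠ 0) (hnk : n ≤ k) (a : Fin (k + 2) → ℝ) :
    paddedCoord k n a = a ⟨n - 1, by omega⟩ := by
  rw [paddedCoord, if_neg hn, LinearMap.proj_apply]
  simp only [min_eq_left hnk]

theorem paddedCoord_of_le {n : ℕ} (hn : k ≤ n) (hk : 0 < k) :
    paddedCoord k (n + 1) = paddedCoord k n := by
  rw [paddedCoord, paddedCoord, if_neg (by omega), if_neg (by omega)]
  congr 2
  omega

theorem paddedCoord_apply_of_eq {f : ℕ → ℝ} (hf : f 0 = 0) {v : Fin (k + 2) → ℝ}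
    (hv : ∀ j : Fin (k + 2), (j : ℕ) < k → v j = f (j + 1)) (hk : 0 < k) (n : ℕ) :
    paddedCoord k n v = f (min n k) := by
  rcases Nat.eq_zero_or_pos n with rfl | hn
  · simp [paddedCoord, hf]
  · rw [paddedCoord, if_neg hn.ne', LinearMap.proj_apply, hv _ (by simp; omega)]
    congr 1
    simp only
    omega

theorem secondDiff_eq_sub (i : ℕ) (a : Fin (k + 2) → ℝ) :
    secondDiff k i a = (paddedCoord k (i + 1) a - paddedCoord k i a) -
      (paddedCoord k (i + 2) a - paddedCoord k (i + 1) a) := by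
  simp only [secondDiff, LinearMap.sub_apply, LinearMap.smul_apply, smul_eq_mul]
  ring

theorem secondDiff_apply_of_eq {f : ℕ → ℝ} (hf : f 0 = 0) {v : Fin (k + 2) → ℝ}
    (hv : ∀ j : Fin (k + 2), (j : ℕ) < k → v j = f (j + 1)) {i : ℕ} (hi : i < k) :
    secondDiff k i v = 2 * f (i + 1) - f i - f (min (i + 2) k) := by
  simp only [secondDiff, LinearMap.sub_apply, LinearMap.smul_apply,
    paddedCoord_apply_of_eq hf hv (by omega), smul_eq_mul]
  rw [min_eq_left (by omega : i + 1 ≤ k), min_eq_left hi.le]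

theorem secondDiff_of_forall_lt_eq_zero {v : Fin (k + 2) → ℝ}
    (hv : ∀ j : Fin (k + 2), (j : ℕ) < k → v j = 0) {i : ℕ} (hi : i < k) :
    secondDiff k i v = 0 := by
  rw [secondDiff_apply_of_eq (f := 0) rfl hv hi]
  simp

theorem secondDiff_zero (hk : 2 ≤ k) (a : Fin (k + 2) → ℝ) :
    secondDiff k 0 a = 2 * a ⟨0, by simp⟩ - a ⟨1, by simp⟩ := by
  simp [secondDiff, hk, paddedCoord]

theorem secondDiff_of_pos {i : ℕ} (hi : 0 < i) (hik : i + 2 ≤ k) (a : Fin (k + 2) → ℝ) :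
    secondDiff k i a =
      2 * a ⟨i, by linarith⟩ - a ⟨i - 1, by linarith [Nat.sub_le i 1]⟩ -
        a ⟨i + 1, by linarith⟩ := by
  simp [secondDiff, paddedCoord_apply, hi.ne', (by omega : i + 1 ≤ k), (by omega : i ≤ k), hik]

theorem secondDiff_last (hk : 2 ≤ k) (a : Fin (k + 2) → ℝ) :
    secondDiff k (k - 1) a =
      a ⟨k - 1, by linarith [Nat.sub_le k 1]⟩ - a ⟨k - 2, by linarith [Nat.sub_le k 2]⟩ := by
  rw [secondDiff_eq_sub, (by omega : k - 1 + 2 = k + 1), (by omega : k - 1 + 1 = k),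
    paddedCoord_of_le le_rfl (by omega), paddedCoord_apply (by omega) le_rfl,
    paddedCoord_apply (by omega) (by omega)]
  simp only [sub_self, sub_zero]
  congr 2

theorem concaveCone_eq (hk : 2 ≤ k) : concaveCone k = {a : Fin (k + 2) → ℝ |
    0 ≤ a ⟨k, by simp⟩ ∧ 0 ≤ a ⟨k + 1, by simp⟩ ∧
    a ⟨1, by simp⟩ ≤ 2 * a ⟨0, by simp⟩ ∧
    a ⟨k - 2, by linarith [Nat.sub_le k 2]⟩ ≤ a ⟨k - 1, by linarith [Nat.sub_le k 1]⟩ ∧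
    ∀ (i : ℕ) (_ : 0 < i) (_ : i + 2 ≤ k),
      a ⟨i - 1, by linarith [Nat.sub_le i 1]⟩ + a ⟨i + 1, by linarith⟩ ≤
        2 * a ⟨i, by linarith⟩} := by
  ext a
  simp only [concaveCone, Set.mem_ofPred_eq]
  refine and_congr_right' (and_congr_right' ⟨fun h => ⟨?_, ?_, fun i h1 h2 => ?_⟩, ?_⟩)
  · have := h 0 (by omega); rw [secondDiff_zero hk] at this; linarith
  · have := h (k - 1) (by omega); rw [secondDiff_last hk] at this; linarith
  · have := h i (by omega); rw [secondDiff_of_pos h1 h2] at this; linarith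
  · rintro ⟨h0, hlast, hmid⟩ i hi
    rcases Nat.eq_zero_or_pos i with rfl | hpos
    · rw [secondDiff_zero hk]; linarith
    rcases (by omega : i = k - 1 ∨ i + 2 ≤ k) with rfl | hik
    · rw [secondDiff_last hk]; linarith
    · rw [secondDiff_of_pos hpos hik]; linarith [hmid i hpos hik]

theorem sum_secondDiff_mul_min (hk : 0 < k) (a : Fin (k + 2) → ℝ) {j : ℕ} (hj : j < k) :
    ∑ m : Fin k, secondDiff k m a * ((min (j + 1) (m + 1) : ℕ) : ℝ) = a ⟨j, by linarith⟩ := by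
  set Δ : ℕ → ℝ := fun n => paddedCoord k (n + 1) a - paddedCoord k n a
  rw [Fin.sum_univ_eq_sum_range (fun m => secondDiff k m a * ((min (j + 1) (m + 1) : ℕ) : ℝ))]
  simp_rw [secondDiff_eq_sub]
  rw [sum_sub_mul_min_eq_sum_range Δ hj (by simp [Δ, paddedCoord_of_le le_rfl hk]),
    sum_range_sub (fun n => paddedCoord k n a), paddedCoord_apply (by omega) hj]
  simp [paddedCoord]

theorem eq_sum_ramp_add (hk : 0 < k) (a : Fin (k + 2) → ℝ) :
    a = ∑ m : Fin k, secondDiff k m a • ramp k m + a ⟨k, by simp⟩ • stdVec k k +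
      a ⟨k + 1, by simp⟩ • stdVec k (k + 1) := by
  funext ⟨j, hj₂⟩
  simp only [Pi.add_apply, Finset.sum_apply, Pi.smul_apply, smul_eq_mul, ramp, stdVec]
  by_cases hj : j < k
  · simp only [hj, if_true, sum_secondDiff_mul_min hk a hj]
    simp [hj.ne]
    omega
  · rcases (by omega : j = k ∨ j = k + 1) with rfl | rfl <;> simp

theorem concaveCone_subset_hull (hk : 0 < k) :
    concaveCone k ⊆ PointedCone.hull ℝ (generators k) := by
  rintro a ⟨hak, hak1, hsec⟩
  rw [SetLike.mem_coe, eq_sum_ramp_add hk a]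
  refine Submodule.add_mem _ (Submodule.add_mem _ (Submodule.sum_mem _ fun m _ => ?_) ?_) ?_
  · exact PointedCone.smul_mem _ (hsec m m.2) (PointedCone.subset_hull (Or.inr ⟨m, rfl⟩))
  · exact PointedCone.smul_mem _ hak (PointedCone.subset_hull (Or.inl (Or.inl rfl)))
  · exact PointedCone.smul_mem _ hak1 (PointedCone.subset_hull (Or.inl (Or.inr rfl)))

theorem weightColumn_nonneg_of_ne_inl_three {l : Fin 5 ⊕ Fin k ⊕ Unit} (hl : l ≠ .inl 3) :
    0 ≤ weightColumn k l ⟨k, by simp⟩ := by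
  rcases l with l | m | _
  · fin_cases l <;> simp_all [weightColumn]
  · simp [weightColumn, m.2.ne']
  · simp [weightColumn]

theorem weightColumn_nonneg_of_ne_inl_one {l : Fin 5 ⊕ Fin k ⊕ Unit} (hl : l ≠ .inl 1) :
    0 ≤ weightColumn k l ⟨k + 1, by simp⟩ := by
  rcases l with l | m | _
  · fin_cases l <;> simp_all [weightColumn]
  · simp only [weightColumn, Sum.elim_inr, Sum.elim_inl]
    rw [if_neg (by omega)]
  · simp [weightColumn]

theorem secondDiff_weightColumn_nonneg {i : ℕ} (hi : i < k) {l : Fin 5 ⊕ Fin k ⊕ Unit}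
    (hl : l ≠ .inr (.inl ⟨i, hi⟩)) : 0 ≤ secondDiff k i (weightColumn k l) := by
  have hmin : min (i + 2) k ≤ i + 2 := min_le_left _ _
  rcases l with l | m | _
  · have hlin : 0 ≤ 2 * ((i + 1 : ℕ) : ℝ) - (i : ℝ) - ((min (i + 2) k : ℕ) : ℝ) := by
      have : ((min (i + 2) k : ℕ) : ℝ) ≤ i + 2 := by exact_mod_cast hmin
      push_cast at this ⊢
      linarith
    fin_cases l
    · rw [secondDiff_apply_of_eq (f := fun n => (n : ℝ)) (by simp)
        (fun j hj => by simp [weightColumn, hj]) hi]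
      exact hlin
    · rw [secondDiff_of_forall_lt_eq_zero (fun j hj => by simp [weightColumn]; omega) hi]
    · rw [secondDiff_apply_of_eq (f := fun n => (n : ℝ)) (by simp)
        (fun j hj => by simp [weightColumn, hj]) hi]
      exact hlin
    · rw [secondDiff_of_forall_lt_eq_zero (fun j hj => by simp [weightColumn]; omega) hi]
    · rw [secondDiff_apply_of_eq (f := fun n => if n = 0 then 0 else 2) (by simp)
        (fun j hj => by simp [weightColumn, hj]) hi]
      simp only [Nat.add_one_ne_zero, if_false]
      split_ifs <;> norm_num
  · rw [secondDiff_apply_of_eq (f := fun n => if n = m + 1 then -2 else 0) (by simp)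
      (fun j hj => by simp [weightColumn]) hi]
    have : i ≠ m := fun h => hl (by simp [h])
    rw [if_neg (by omega : ¬ i + 1 = m + 1)]
    split_ifs <;> norm_num
  · rw [secondDiff_of_forall_lt_eq_zero (fun j hj => by simp [weightColumn, hj]) hi]

theorem iInter_subset_concaveCone :
    ⋂ l, (PointedCone.hull ℝ (weightColumn k '' {l' | l' ≠ l}) : Set (Fin (k + 2) → ℝ)) ⊆
      concaveCone k := by
  intro a ha
  rw [Set.mem_iInter] at ha
  have facet : ∀ l (φ : (Fin (k + 2) → ℝ) →ₗ[ℝ] ℝ),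
      (∀ l', l' ≠ l → 0 ≤ φ (weightColumn k l')) → 0 ≤ φ a := fun l φ hφ =>
    PointedCone.nonneg_of_mem_hull φ (by rintro _ ⟨l', hl', rfl⟩; exact hφ l' hl') (ha l)
  exact ⟨facet (.inl 3) (LinearMap.proj _) fun _ => weightColumn_nonneg_of_ne_inl_three,
    facet (.inl 1) (LinearMap.proj _) fun _ => weightColumn_nonneg_of_ne_inl_one,
    fun i hi => facet (.inr (.inl ⟨i, hi⟩)) _ fun _ => secondDiff_weightColumn_nonneg hi⟩

/-- The coefficient vector with entries `c` on `d₁, …, d₅`, `f m` on `d_{6+m}` and `z` on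
`d_{k+6}`. -/
def coeffs (k : ℕ) (c : Fin 5 → ℝ) (f : ℕ → ℝ) (z : ℝ) : Fin 5 ⊕ Fin k ⊕ Unit → ℝ :=
  Sum.elim c (Sum.elim (fun m => f m) fun _ => z)

theorem coeffs_nonneg {c : Fin 5 → ℝ} {f : ℕ → ℝ} {z : ℝ} (hc : ∀ i, 0 ≤ c i)
    (hf : ∀ m, 0 ≤ f m) (hz : 0 ≤ z) (l : Fin 5 ⊕ Fin k ⊕ Unit) : 0 ≤ coeffs k c f z l := by
  rcases l with l | m | _
  exacts [hc l, hf m, hz]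

theorem sum_coeffs_smul_weightColumn (c : Fin 5 → ℝ) (f : ℕ → ℝ) (z : ℝ) :
    ∑ l, coeffs k c f z l • weightColumn k l = fun j : Fin (k + 2) =>
      if (j : ℕ) < k then (c 0 + c 2) * ((j : ℕ) + 1) + 2 * c 4 - 2 * f j
      else if (j : ℕ) = k then c 2 - 2 * c 3 + z else c 0 - 2 * c 1 + z := by
  funext ⟨j, hj⟩
  simp only [Fintype.sum_sum_type, Fin.sum_univ_five, Finset.sum_apply, Pi.smul_apply,
    smul_eq_mul, coeffs, weightColumn, Sum.elim_inl, Sum.elim_inr, Finset.univ_unique,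
    Finset.sum_singleton, Fin.sum_mul_ite_val_eq, Matrix.cons_val]
  split_ifs <;> first | omega | (push_cast; ring)

theorem eq_sum_coeffs_smul_weightColumn {v : Fin (k + 2) → ℝ} {c : Fin 5 → ℝ} {f : ℕ → ℝ}
    {z : ℝ} (hlt : ∀ j : Fin (k + 2), (j : ℕ) < k →
      v j = (c 0 + c 2) * ((j : ℕ) + 1) + 2 * c 4 - 2 * f j)
    (hk : v ⟨k, by simp⟩ = c 2 - 2 * c 3 + z) (hk' : v ⟨k + 1, by simp⟩ = c 0 - 2 * c 1 + z) :
    v = ∑ l, coeffs k c f z l • weightColumn k l := by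
  rw [sum_coeffs_smul_weightColumn]
  funext ⟨j, hj⟩
  rcases (by omega : j < k ∨ j = k ∨ j = k + 1) with h | rfl | rfl
  · simp [h, hlt ⟨j, hj⟩ h]
  · simpa using hk
  · simpa using hk'

theorem stdVec_apply_of_lt {n : ℕ} {j : Fin (k + 2)} (hj : (j : ℕ) < k) (hn : k ≤ n) :
    stdVec k n j = 0 :=
  if_neg (by omega)

theorem stdVec_mem_iInter_hull :
    stdVec k k ∈ ⋂ l, (PointedCone.hull ℝ (weightColumn k '' {l' | l' ≠ l}) : Set _) := by
  let A := coeffs k ![0, 0, 1, 0, 0] (fun m => ((m : ℝ) + 1) / 2) 0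
  let B := coeffs k ![0, 1 / 2, 0, 0, 0] 0 1
  have hA₀ : ∀ l, 0 ≤ A l :=
    coeffs_nonneg (by simp [Fin.forall_fin_succ]) (fun _ => by positivity) le_rfl
  have hB₀ : ∀ l, 0 ≤ B l :=
    coeffs_nonneg (by simp [Fin.forall_fin_succ]) (fun _ => le_rfl) zero_le_one
  have hA : stdVec k k = ∑ l, A l • weightColumn k l :=
    eq_sum_coeffs_smul_weightColumn (fun j hj => by rw [stdVec_apply_of_lt hj le_rfl]; simp; ring)
      (by simp [stdVec]) (by simp [stdVec])
  have hB : stdVec k k = ∑ l, B l • weightColumn k l :=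
    eq_sum_coeffs_smul_weightColumn (fun j hj => by rw [stdVec_apply_of_lt hj le_rfl]; simp)
      (by simp [stdVec]) (by simp [stdVec])
  refine PointedCone.mem_iInter_hull_image_ne ![A, B] (Fin.forall_fin_two.2 ⟨hA₀, hB₀⟩)
    (Fin.forall_fin_two.2 ⟨hA, hB⟩) (fun l => Fin.exists_fin_two.2 ?_)
  rcases l with l | m | _
  · fin_cases l <;> simp [A, B, coeffs]
  · simp [B, coeffs]
  · simp [A, coeffs]

theorem stdVec_succ_mem_iInter_hull :
    stdVec k (k + 1) ∈ ⋂ l, (PointedCone.hull ℝ (weightColumn k '' {l' | l' ≠ l}) : Set _) := by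
  let A := coeffs k ![1, 0, 0, 0, 0] (fun m => ((m : ℝ) + 1) / 2) 0
  let B := coeffs k ![0, 0, 0, 1 / 2, 0] 0 1
  have hA₀ : ∀ l, 0 ≤ A l :=
    coeffs_nonneg (by simp [Fin.forall_fin_succ]) (fun _ => by positivity) le_rfl
  have hB₀ : ∀ l, 0 ≤ B l :=
    coeffs_nonneg (by simp [Fin.forall_fin_succ]) (fun _ => le_rfl) zero_le_one
  have hA : stdVec k (k + 1) = ∑ l, A l • weightColumn k l :=
    eq_sum_coeffs_smul_weightColumn
      (fun j hj => by rw [stdVec_apply_of_lt hj (by omega)]; simp; ring)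
      (by simp [stdVec]) (by simp [stdVec])
  have hB : stdVec k (k + 1) = ∑ l, B l • weightColumn k l :=
    eq_sum_coeffs_smul_weightColumn (fun j hj => by rw [stdVec_apply_of_lt hj (by omega)]; simp)
      (by simp [stdVec]) (by simp [stdVec])
  refine PointedCone.mem_iInter_hull_image_ne ![A, B] (Fin.forall_fin_two.2 ⟨hA₀, hB₀⟩)
    (Fin.forall_fin_two.2 ⟨hA, hB⟩) (fun l => Fin.exists_fin_two.2 ?_)
  rcases l with l | m | _
  · fin_cases l <;> simp [A, B, coeffs]
  · simp [B, coeffs]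
  · simp [A, coeffs]

theorem ramp_mem_iInter_hull {i : ℕ} :
    ramp k i ∈ ⋂ l, (PointedCone.hull ℝ (weightColumn k '' {l' | l' ≠ l}) : Set _) := by
  let above : ℕ → ℝ := fun m => ((m - i : ℕ) : ℝ) / 2
  let A := coeffs k ![1, 1 / 2, 0, 0, 0] above 0
  let B := coeffs k ![0, 0, 1, 1 / 2, 0] above 0
  let C := coeffs k ![0, 0, 0, 0, ((i : ℝ) + 1) / 2] (fun m => ((i - m : ℕ) : ℝ) / 2) 0
  have hA₀ : ∀ l, 0 ≤ A l :=
    coeffs_nonneg (by simp [Fin.forall_fin_succ]) (fun _ => by positivity) le_rfl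
  have hB₀ : ∀ l, 0 ≤ B l :=
    coeffs_nonneg (by simp [Fin.forall_fin_succ]) (fun _ => by positivity) le_rfl
  have hC₀ : ∀ l, 0 ≤ C l :=
    coeffs_nonneg (by simp [Fin.forall_fin_succ]; positivity) (fun _ => by positivity) le_rfl
  have hmin : ∀ j : ℕ, ((min (j + 1) (i + 1) : ℕ) : ℝ) = (j + 1) - (j - i : ℕ) ∧
      ((min (j + 1) (i + 1) : ℕ) : ℝ) = (i + 1) - (i - j : ℕ) := by
    intro j
    constructor <;> rw [eq_sub_iff_add_eq] <;> norm_cast <;> omega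
  have hA : ramp k i = ∑ l, A l • weightColumn k l :=
    eq_sum_coeffs_smul_weightColumn
      (fun j hj => by rw [ramp, if_pos hj, (hmin j).1]; simp [above]; ring)
      (by simp [ramp]) (by simp [ramp])
  have hB : ramp k i = ∑ l, B l • weightColumn k l :=
    eq_sum_coeffs_smul_weightColumn
      (fun j hj => by rw [ramp, if_pos hj, (hmin j).1]; simp [above]; ring)
      (by simp [ramp]) (by simp [ramp])
  have hC : ramp k i = ∑ l, C l • weightColumn k l :=
    eq_sum_coeffs_smul_weightColumn
      (fun j hj => by rw [ramp, if_pos hj, (hmin j).2]; simp; ring)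
      (by simp [ramp]) (by simp [ramp])
  refine PointedCone.mem_iInter_hull_image_ne ![A, B, C]
    (Fin.forall_fin_succ.2 ⟨hA₀, Fin.forall_fin_two.2 ⟨hB₀, hC₀⟩⟩)
    (Fin.forall_fin_succ.2 ⟨hA, Fin.forall_fin_two.2 ⟨hB, hC⟩⟩) (fun l => ?_)
  obtain h | h | h : A l = 0 ∨ B l = 0 ∨ C l = 0 := by
    rcases l with l | m | _
    · fin_cases l <;> simp [A, B, C, coeffs]
    · rcases le_total (m : ℕ) i with h | h
      · simp [A, coeffs, above, Nat.sub_eq_zero_of_le h]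
      · simp [C, coeffs, Nat.sub_eq_zero_of_le h]
    · simp [A, coeffs]
  exacts [⟨0, h⟩, ⟨1, h⟩, ⟨2, h⟩]

theorem hull_generators_subset_iInter :
    (PointedCone.hull ℝ (generators k) : Set (Fin (k + 2) → ℝ)) ⊆
      ⋂ l, (PointedCone.hull ℝ (weightColumn k '' {l' | l' ≠ l}) : Set _) := by
  have hgen : generators k ⊆
      ⋂ l, (PointedCone.hull ℝ (weightColumn k '' {l' | l' ≠ l}) : Set _) := by
    rintro g ((rfl | rfl) | ⟨i, rfl⟩)
    exacts [stdVec_mem_iInter_hull, stdVec_succ_mem_iInter_hull, ramp_mem_iInter_hull]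
  exact Set.subset_iInter fun l => Submodule.span_le.2 fun _ hg => Set.mem_iInter.1 (hgen hg) l

end MovableCone

open MovableCone

/-- for the even dihedral case, the intersection of the cones spanned by
all size-`(k+5)` subsets (facet images) of the `k+6` columns of the weight matrix equals
`cone(q₁, q₂, u₁, …, u_k)`, which equals the polyhedron cut out by the inequalities. -/
theorem stmt19 (k : ℕ) (hk : 2 ≤ k)
    (d : (Fin 5 ⊕ Fin k ⊕ Unit) → Fin (k + 2) → ℝ)
    (hd1 : d (Sum.inl 0) = fun j : Fin (k + 2) =>
      if (j : ℕ) < k then (((j : ℕ) + 1 : ℕ) : ℝ) else if (j : ℕ) = k then 0 else 1)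
    (hd2 : d (Sum.inl 1) = fun j : Fin (k + 2) =>
      if (j : ℕ) = k + 1 then (-2 : ℝ) else 0)
    (hd3 : d (Sum.inl 2) = fun j : Fin (k + 2) =>
      if (j : ℕ) < k then (((j : ℕ) + 1 : ℕ) : ℝ) else if (j : ℕ) = k then 1 else 0)
    (hd4 : d (Sum.inl 3) = fun j : Fin (k + 2) =>
      if (j : ℕ) = k then (-2 : ℝ) else 0)
    (hd5 : d (Sum.inl 4) = fun j : Fin (k + 2) =>
      if (j : ℕ) < k then (2 : ℝ) else 0)
    (hd6 : ∀ i : Fin k, d (Sum.inr (Sum.inl i)) = fun j : Fin (k + 2) =>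
      if (j : ℕ) = (i : ℕ) then (-2 : ℝ) else 0)
    (hd7 : d (Sum.inr (Sum.inr ())) = fun j : Fin (k + 2) =>
      if (j : ℕ) < k then (0 : ℝ) else 1)
    (q₁ : Fin (k + 2) → ℝ) (hq₁ : q₁ = fun j : Fin (k + 2) =>
      if (j : ℕ) = k then (1 : ℝ) else 0)
    (q₂ : Fin (k + 2) → ℝ) (hq₂ : q₂ = fun j : Fin (k + 2) =>
      if (j : ℕ) = k + 1 then (1 : ℝ) else 0)
    (u : Fin k → Fin (k + 2) → ℝ)
    (hu : ∀ i j, u i j =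
      if (j : ℕ) < k then ((min ((j : ℕ) + 1) ((i : ℕ) + 1) : ℕ) : ℝ) else 0) :
    (⋂ l : Fin 5 ⊕ Fin k ⊕ Unit, cone (d '' {l' | l' ≠ l}))
      = cone ({q₁} ∪ {q₂} ∪ Set.range u) ∧
    cone ({q₁} ∪ {q₂} ∪ Set.range u)
      = {a : Fin (k + 2) → ℝ |
          0 ≤ a ⟨k, by omega⟩ ∧
          0 ≤ a ⟨k + 1, by omega⟩ ∧
          a ⟨1, by omega⟩ ≤ 2 * a ⟨0, by omega⟩ ∧
          a ⟨k - 2, by omega⟩ ≤ a ⟨k - 1, by omega⟩ ∧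
          ∀ (i : ℕ) (h1 : 0 < i) (h2 : i + 2 ≤ k),
            a ⟨i - 1, by omega⟩ + a ⟨i + 1, by omega⟩ ≤ 2 * a ⟨i, by omega⟩} := by
  obtain rfl : d = weightColumn k := by
    funext l
    rcases l with l | i | ⟨⟩
    · fin_cases l
      exacts [hd1, hd2, hd3, hd4, hd5]
    exacts [hd6 i, hd7]
  obtain rfl : u = fun i : Fin k => ramp k i := funext fun i => funext (hu i)
  subst hq₁ hq₂
  simp only [cone_eq_hull]
  rw [← concaveCone_eq hk]
  have h₁ := iInter_subset_concaveCone (k := k)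
  have h₂ := concaveCone_subset_hull (k := k) (by omega)
  have h₃ := hull_generators_subset_iInter (k := k)
  exact ⟨(h₁.trans h₂).antisymm h₃, (h₃.trans h₁).antisymm h₂⟩
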